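/- arXiv:1912.08512 — 9 statements merged into one kernel-verified Lean document; each statement's English description precedes it below -/
import Mathlib

section
/- For all (ρ₁,ρ₂) ∈ [-1,1]², one has (1-ρ₁)(1-ρ₁ρ₂)(1-ρ₂) ≤ 2, and the value 2 is attained at (ρ₁,ρ₂) = (0,-1). -/
/-!
Write `Q(a, b) = (1 - a) * (1 - a * b) * (1 - b)`. Since
`(1 - a) * (1 - b) = 2 * (1 + a * b) - (1 + a) * (1 + b)`, one gets
`2 - Q(a, b) = 2 * (a * b) ^ 2 + (1 + a) * (1 + b) * (1 - a * b)`,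
and every term on the right is nonnegative on `[-1, 1]²`.
-/

theorem two_sub_pohst_eq {R : Type*} [CommRing R] (a b : R) :
    2 - (1 - a) * (1 - a * b) * (1 - b) = 2 * (a * b) ^ 2 + (1 + a) * (1 + b) * (1 - a * b) := by
  ring

section

variable {R : Type*} [CommRing R] [LinearOrder R] [IsStrictOrderedRing R] {a b : R}

theorem mul_le_one_of_mem_Icc (ha : a ∈ Set.Icc (-1 : R) 1) (hb : b ∈ Set.Icc (-1 : R) 1) :
    a * b ≤ 1 :=
  calc a * b ≤ |a| * |b| := (le_abs_self _).trans (abs_mul a b).le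
    _ ≤ 1 := mul_le_one₀ (abs_le.2 ha) (abs_nonneg b) (abs_le.2 hb)

theorem pohst_le_two (ha : a ∈ Set.Icc (-1 : R) 1) (hb : b ∈ Set.Icc (-1 : R) 1) :
    (1 - a) * (1 - a * b) * (1 - b) ≤ 2 := by
  have h_ab : 0 ≤ 1 - a * b := sub_nonneg.2 (mul_le_one_of_mem_Icc ha hb)
  have ha' : 0 ≤ 1 + a := by linarith [ha.1]
  have hb' : 0 ≤ 1 + b := by linarith [hb.1]
  have h_rhs : 0 ≤ 2 * (a * b) ^ 2 + (1 + a) * (1 + b) * (1 - a * b) := by positivity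
  linarith [two_sub_pohst_eq a b]

end

theorem stmt_1 :
    (∀ ρ₁ ρ₂ : ℝ, ρ₁ ∈ Set.Icc (-1 : ℝ) 1 → ρ₂ ∈ Set.Icc (-1 : ℝ) 1 →
      (1 - ρ₁) * (1 - ρ₁ * ρ₂) * (1 - ρ₂) ≤ 2) ∧
    (1 - (0 : ℝ)) * (1 - 0 * (-1)) * (1 - (-1)) = 2 :=
  ⟨fun _ _ => pohst_le_two, by norm_num⟩
end

section
/- For all (ρ₁,ρ₂,ρ₃) ∈ [-1,1]³, one has (1-ρ₁)(1-ρ₁ρ₂)(1-ρ₁ρ₂ρ₃)(1-ρ₂)(1-ρ₂ρ₃)(1-ρ₃) ≤ 4, and the value 4 is attained at (ρ₁,ρ₂,ρ₃) = (-1,0,-1). -/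
/-!
Pair the six factors as `(1 - ρ₁)(1 - ρ₃)`, `(1 - ρ₁ρ₂)(1 - ρ₂ρ₃)` and `(1 - ρ₂)(1 - ρ₁ρ₂ρ₃)`.
By AM–GM each pair is at most the square of one minus the mean of its two entries, so with
`t = (ρ₁ + ρ₃)/2` and `w = (1 + ρ₁ρ₃)/2` the product is at most `g² = ((1 - t)(1 - ρ₂t)(1 - ρ₂w))²`,
where `|t| ≤ w ≤ 1`. It remains to show `g ≤ 2`. For `ρ₂ ≥ 0` this follows from
`(1 - ρ₂t)(1 - ρ₂w) ≤ 1 - ρ₂²w² ≤ 1`. For `ρ₂ ≤ 0` one may take `w = 1`, and maximising the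
quadratic `(1 - t)(1 - ρ₂t)` over `t ∈ [-1, 1]` leaves a one-variable cubic inequality.
-/

lemma one_sub_mul_one_sub_le_sq {x y m : ℝ} (hm : x + y = 2 * m) :
    (1 - x) * (1 - y) ≤ (1 - m) ^ 2 := by
  rw [show m = (x + y) / 2 by linarith]
  nlinarith [sq_nonneg (x - y)]

lemma abs_mul_le_one {x y : ℝ} (hx : |x| ≤ 1) (hy : |y| ≤ 1) : |x * y| ≤ 1 := by
  rw [abs_mul]
  exact mul_le_one₀ hx (abs_nonneg y) hy

lemma one_sub_nonneg_of_abs_le_one {x : ℝ} (hx : |x| ≤ 1) : 0 ≤ 1 - x := by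
  linarith [le_abs_self x]

lemma abs_add_le_one_add_mul {a c : ℝ} (ha : |a| ≤ 1) (hc : |c| ≤ 1) : |a + c| ≤ 1 + a * c := by
  obtain ⟨ha₁, ha₂⟩ := abs_le.mp ha
  obtain ⟨hc₁, hc₂⟩ := abs_le.mp hc
  exact abs_le.mpr ⟨by nlinarith [mul_nonneg (by linarith : 0 ≤ 1 + a) (by linarith : 0 ≤ 1 + c)],
    by nlinarith [mul_nonneg (by linarith : 0 ≤ 1 - a) (by linarith : 0 ≤ 1 - c)]⟩

namespace Pohst

lemma product_le_sq {a b c : ℝ} (ha : |a| ≤ 1) (hb : |b| ≤ 1) (hc : |c| ≤ 1) :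
    (1 - a) * (1 - a * b) * (1 - a * b * c) * (1 - b) * (1 - b * c) * (1 - c) ≤
      ((1 - (a + c) / 2) * (1 - b * ((a + c) / 2)) * (1 - b * ((1 + a * c) / 2))) ^ 2 := by
  have hab := abs_mul_le_one ha hb
  have pair₁ : (1 - a) * (1 - c) ≤ (1 - (a + c) / 2) ^ 2 := one_sub_mul_one_sub_le_sq (by ring)
  have pair₂ : (1 - a * b) * (1 - b * c) ≤ (1 - b * ((a + c) / 2)) ^ 2 :=
    one_sub_mul_one_sub_le_sq (by ring)
  have pair₃ : (1 - b) * (1 - a * b * c) ≤ (1 - b * ((1 + a * c) / 2)) ^ 2 :=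
    one_sub_mul_one_sub_le_sq (by ring)
  have hp₂ : 0 ≤ (1 - a * b) * (1 - b * c) := mul_nonneg (one_sub_nonneg_of_abs_le_one hab)
    (one_sub_nonneg_of_abs_le_one (abs_mul_le_one hb hc))
  have hp₃ : 0 ≤ (1 - b) * (1 - a * b * c) := mul_nonneg (one_sub_nonneg_of_abs_le_one hb)
    (one_sub_nonneg_of_abs_le_one (abs_mul_le_one hab hc))
  calc _ = ((1 - a) * (1 - c)) * ((1 - a * b) * (1 - b * c)) * ((1 - b) * (1 - a * b * c)) := by
        ring
    _ ≤ _ := mul_le_mul (mul_le_mul pair₁ pair₂ hp₂ (sq_nonneg _)) pair₃ hp₃ (by positivity)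
    _ = _ := by ring

section Reduced

variable {b t w : ℝ}

lemma one_sub_mul_one_sub_mul_one_sub_le_two_of_nonpos (hb : -1 ≤ b) (hb0 : b ≤ 0)
    (ht : |t| ≤ 1) : (1 - t) * (1 - b * t) * (1 - b) ≤ 2 := by
  obtain ⟨ht₁, ht₂⟩ := abs_le.mp ht
  rcases le_total (-3 * b) 1 with hb₃ | hb₃
  · -- the maximum over `t` is attained at the endpoint `t = -1`
    have endpoint : (1 - t) * (1 - b * t) ≤ 2 * (1 + b) := by
      nlinarith [mul_nonneg (by linarith : 0 ≤ t + 1) (by nlinarith : 0 ≤ 1 + 2 * b - b * t)]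
    nlinarith
  · have amgm : -4 * b * ((1 - t) * (1 - b * t)) ≤ (1 - b) ^ 2 := by
      nlinarith [sq_nonneg (2 * b * t - 1 - b)]
    have cubic : (1 - b) ^ 3 ≤ -8 * b := by
      nlinarith [mul_nonneg (by linarith : 0 ≤ 1 + b) (by nlinarith : 0 ≤ b ^ 2 - 4 * b - 1)]
    nlinarith

lemma reduced_nonneg (hb : |b| ≤ 1) (htw : |t| ≤ w) (hw : w ≤ 1) :
    0 ≤ (1 - t) * (1 - b * t) * (1 - b * w) := by
  have ht : |t| ≤ 1 := htw.trans hw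
  have hw' : |w| ≤ 1 := abs_le.mpr ⟨by linarith [abs_nonneg t], hw⟩
  exact mul_nonneg (mul_nonneg (one_sub_nonneg_of_abs_le_one ht)
    (one_sub_nonneg_of_abs_le_one (abs_mul_le_one hb ht)))
    (one_sub_nonneg_of_abs_le_one (abs_mul_le_one hb hw'))

lemma reduced_le_two (hb : |b| ≤ 1) (htw : |t| ≤ w) (hw : w ≤ 1) :
    (1 - t) * (1 - b * t) * (1 - b * w) ≤ 2 := by
  obtain ⟨hb₁, hb₂⟩ := abs_le.mp hb
  obtain ⟨htw₁, htw₂⟩ := abs_le.mp htw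
  have ht : |t| ≤ 1 := htw.trans hw
  have h₁ : 0 ≤ 1 - t := one_sub_nonneg_of_abs_le_one ht
  have h₂ : 0 ≤ 1 - b * t := one_sub_nonneg_of_abs_le_one (abs_mul_le_one hb ht)
  rcases le_total 0 b with hb₀ | hb₀
  · have h₃ : 0 ≤ 1 - b * w := by nlinarith
    have : (1 - b * t) * (1 - b * w) ≤ 1 := by
      nlinarith [mul_nonneg (mul_nonneg hb₀ (by linarith : 0 ≤ w + t)) h₃, sq_nonneg (b * w)]
    nlinarith
  · calc (1 - t) * (1 - b * t) * (1 - b * w) ≤ (1 - t) * (1 - b * t) * (1 - b) := by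
          gcongr
          nlinarith
      _ ≤ 2 := one_sub_mul_one_sub_mul_one_sub_le_two_of_nonpos hb₁ hb₀ ht

end Reduced

end Pohst

theorem stmt_2 :
    (∀ ρ₁ ρ₂ ρ₃ : ℝ, ρ₁ ∈ Set.Icc (-1 : ℝ) 1 → ρ₂ ∈ Set.Icc (-1 : ℝ) 1 →
      ρ₃ ∈ Set.Icc (-1 : ℝ) 1 →
      (1 - ρ₁) * (1 - ρ₁ * ρ₂) * (1 - ρ₁ * ρ₂ * ρ₃) * (1 - ρ₂) * (1 - ρ₂ * ρ₃) * (1 - ρ₃) ≤ 4) ∧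
    (1 - (-1 : ℝ)) * (1 - (-1) * 0) * (1 - (-1) * 0 * (-1)) * (1 - 0) * (1 - 0 * (-1)) * (1 - (-1)) = 4 := by
  refine ⟨fun a b c ha hb hc => ?_, by norm_num⟩
  replace ha : |a| ≤ 1 := abs_le.mpr ha
  replace hb : |b| ≤ 1 := abs_le.mpr hb
  replace hc : |c| ≤ 1 := abs_le.mpr hc
  have htw : |(a + c) / 2| ≤ (1 + a * c) / 2 := by
    rw [abs_div, abs_two]
    exact div_le_div_of_nonneg_right (abs_add_le_one_add_mul ha hc) zero_le_two
  have hw : (1 + a * c) / 2 ≤ 1 := by linarith [le_abs_self (a * c), abs_mul_le_one ha hc]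
  calc _ ≤ _ := Pohst.product_le_sq ha hb hc
    _ ≤ 2 ^ 2 := by
        gcongr
        exacts [Pohst.reduced_nonneg hb htw hw, Pohst.reduced_le_two hb htw hw]
    _ = 4 := by norm_num
end

section
/- Let ε₁,…,εₙ be nonzero complex numbers with |ε₁| ≤ |ε₂| ≤ ⋯ ≤ |εₙ|. Then ∏_{1 ≤ i < j ≤ n} |1 - ε_i/ε_j|² ≤ n^n. -/
/-!
If all |εᵢ| are equal, dividing by their common modulus puts the εᵢ on the unit circle, and then
|1 - εᵢ/εⱼ| = |εⱼ - εᵢ|, so the product is |det V|² for the Vandermonde matrix V of the εᵢ. Its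
entries have modulus 1, so Hadamard's inequality (AM–GM on the eigenvalues of V Vᴴ) gives nⁿ.

In general, multiply the εᵢ of smallest modulus a by z. Since the εᵢ are sorted by modulus, the
product becomes a polynomial in z, so by the maximum modulus principle its value at z = 1 is
bounded by its values on |z| = b/a, where b is the next modulus. There the two lowest moduli have
merged, and induction on the set of moduli finishes the proof.
-/

open Finset
open scoped ComplexOrder

theorem Real.prod_le_sum_div_card_pow {ι : Type*} (s : Finset ι) (z : ι → ℝ)
    (hz : ∀ i ∈ s, 0 ≤ z i) : ∏ i ∈ s, z i ≤ ((∑ i ∈ s, z i) / #s) ^ #s := by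
  rcases s.eq_empty_or_nonempty with rfl | hs
  · simp
  have hcard : (#s : ℝ) ≠ 0 := by positivity
  have amgm : ∏ i ∈ s, z i ^ ((#s : ℝ)⁻¹) ≤ (∑ i ∈ s, z i) / #s := by
    convert Real.geom_mean_le_arith_mean_weighted s (fun _ ↦ ((#s : ℝ)⁻¹)) z
      (fun _ _ ↦ by positivity) (by simp [hcard]) hz using 1
    rw [← mul_sum, inv_mul_eq_div]
  calc ∏ i ∈ s, z i = (∏ i ∈ s, z i ^ ((#s : ℝ)⁻¹)) ^ #s := by
        rw [← prod_pow]
        exact prod_congr rfl fun i hi ↦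
          (Real.rpow_inv_natCast_pow (hz i hi) hs.card_ne_zero).symm
    _ ≤ _ := pow_le_pow_left₀ (prod_nonneg fun i hi ↦ Real.rpow_nonneg (hz i hi) _) amgm _

namespace Matrix

variable {𝕜 ι : Type*} [RCLike 𝕜] [Fintype ι] [DecidableEq ι]

theorem PosSemidef.norm_det_le {A : Matrix ι ι 𝕜} (hA : A.PosSemidef) :
    ‖A.det‖ ≤ (‖A.trace‖ / Fintype.card ι) ^ Fintype.card ι := by
  have hev := hA.eigenvalues_nonneg
  have hdet : ‖A.det‖ = ∏ i, hA.isHermitian.eigenvalues i := by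
    rw [hA.isHermitian.det_eq_prod_eigenvalues, norm_prod]
    exact prod_congr rfl fun i _ ↦ by rw [RCLike.norm_ofReal, abs_of_nonneg (hev i)]
  have htrace : ‖A.trace‖ = ∑ i, hA.isHermitian.eigenvalues i := by
    rw [hA.isHermitian.trace_eq_sum_eigenvalues, ← RCLike.ofReal_sum, RCLike.norm_ofReal,
      abs_of_nonneg (sum_nonneg fun i _ ↦ hev i)]
  rw [hdet, htrace]
  exact Real.prod_le_sum_div_card_pow _ _ fun i _ ↦ hev i

theorem norm_det_sq_le_of_norm_le_one {M : Matrix ι ι 𝕜} (hM : ∀ i j, ‖M i j‖ ≤ 1) :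
    ‖M.det‖ ^ 2 ≤ (Fintype.card ι : ℝ) ^ Fintype.card ι := by
  set N : ℝ := (Fintype.card ι : ℝ)
  have htrace : ‖(M * Mᴴ).trace‖ ≤ N * N := calc
    ‖(M * Mᴴ).trace‖ ≤ ∑ i, ∑ j, ‖M i j‖ * ‖star (M i j)‖ := by
      simp only [trace, diag_apply, mul_apply, conjTranspose_apply]
      exact (norm_sum_le _ _).trans (sum_le_sum fun i _ ↦
        (norm_sum_le _ _).trans_eq (sum_congr rfl fun j _ ↦ norm_mul _ _))
    _ ≤ ∑ _i : ι, ∑ _j : ι, (1 : ℝ) := by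
      gcongr with i _ j _
      rw [norm_star]
      exact mul_le_one₀ (hM i j) (norm_nonneg _) (hM i j)
    _ = N * N := by simp [N]
  calc ‖M.det‖ ^ 2 = ‖(M * Mᴴ).det‖ := by
        rw [det_mul, det_conjTranspose, norm_mul, norm_star, sq]
    _ ≤ (‖(M * Mᴴ).trace‖ / N) ^ Fintype.card ι :=
        (posSemidef_self_mul_conjTranspose M).norm_det_le
    _ ≤ (N * N / N) ^ Fintype.card ι := by gcongr
    _ ≤ N ^ Fintype.card ι := by
      rcases eq_or_ne N 0 with h | h
      · simp [h]
      · rw [mul_div_cancel_right₀ _ h]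

end Matrix

noncomputable def remakProduct {n : ℕ} (ε : Fin n → ℂ) : ℂ :=
  ∏ j, ∏ i ∈ Iio j, (1 - ε i / ε j)

section RemakProduct

variable {n : ℕ}

theorem norm_remakProduct_sq (ε : Fin n → ℂ) :
    ‖remakProduct ε‖ ^ 2 = ∏ j, ∏ i ∈ Iio j, ‖1 - ε i / ε j‖ ^ 2 := by
  simp only [remakProduct, norm_prod, prod_pow]

theorem remakProduct_smul {c : ℂ} (hc : c ≠ 0) (ε : Fin n → ℂ) :
    remakProduct (c • ε) = remakProduct ε := by
  simp only [remakProduct, Pi.smul_apply, smul_eq_mul, mul_div_mul_left _ _ hc]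

theorem norm_remakProduct_eq_norm_det_vandermonde {u : Fin n → ℂ} (hu : ∀ i, ‖u i‖ = 1) :
    ‖remakProduct u‖ = ‖(Matrix.vandermonde u).det‖ := by
  have hfactor : ∀ i j, ‖1 - u i / u j‖ = ‖u j - u i‖ := fun i j ↦ by
    rw [← div_self (norm_ne_zero_iff.1 ((hu j).trans_ne one_ne_zero)), ← sub_div, norm_div,
      hu j, div_one]
  rw [Matrix.det_vandermonde, remakProduct, prod_comm' (t' := univ) (s' := Ioi)
    (by simp)]
  simp only [norm_prod, hfactor]

theorem norm_remakProduct_le_of_norm_eq {ε : Fin n → ℂ} {r : ℝ} (hr : 0 < r)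
    (hε : ∀ i, ‖ε i‖ = r) : ‖remakProduct ε‖ ≤ √(n ^ n) := by
  have hu : ∀ i, ‖((r : ℂ)⁻¹ • ε) i‖ = 1 := fun i ↦ by
    simp [hε i, abs_of_pos hr, hr.ne']
  rw [← remakProduct_smul (inv_ne_zero (Complex.ofReal_ne_zero.2 hr.ne')),
    norm_remakProduct_eq_norm_det_vandermonde hu,
    Real.le_sqrt (norm_nonneg _) (by positivity)]
  simpa using Matrix.norm_det_sq_le_of_norm_le_one (M := Matrix.vandermonde _)
    fun i j ↦ by rw [Matrix.vandermonde_apply, norm_pow, hu i, one_pow]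

theorem norm_remakProduct_le_of_norm_piecewise_smul_le {ε : Fin n → ℂ} {s : Finset (Fin n)}
    (hs : IsLowerSet (s : Set (Fin n))) {R C : ℝ} (hR : 1 ≤ R)
    (hC : ∀ z : ℂ, ‖z‖ = R → ‖remakProduct (s.piecewise (z • ε) ε)‖ ≤ C) :
    ‖remakProduct ε‖ ≤ C := by
  classical
  set g : ℂ → ℂ := fun z ↦
    ∏ j, ∏ i ∈ Iio j, (1 - (if i ∈ s ∧ j ∉ s then z else 1) * (ε i / ε j))
  -- `g` is a polynomial in `z` and equals the scaled product away from `z = 0`: since `s` is a lower set,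
  -- only the factors with `i ∈ s`, `j ∉ s` depend on `z`.
  have hg_one : g 1 = remakProduct ε := by simp [g, remakProduct]
  have hg_eq : ∀ z ≠ 0, g z = remakProduct (s.piecewise (z • ε) ε) := fun z hz ↦
    prod_congr rfl fun j _ ↦ prod_congr rfl fun i hi ↦ by
      have hij : i ≤ j := (mem_Iio.1 hi).le
      by_cases hj : j ∈ s
      · have hi : i ∈ s := hs hij hj
        simp [hi, hj, mul_div_mul_left _ _ hz]
      · by_cases hi : i ∈ s
        · simp [hi, hj, mul_div_assoc]
        · simp [hi, hj]
  have hg_diff : Differentiable ℂ g := by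
    refine Differentiable.fun_finsetProd fun j _ ↦ Differentiable.fun_finsetProd fun i _ ↦ ?_
    split_ifs <;> fun_prop
  have hR0 : R ≠ 0 := by positivity
  rw [← hg_one]
  refine Complex.norm_le_of_forall_mem_frontier_norm_le
    (Metric.isBounded_ball (x := 0) (r := R)) hg_diff.diffContOnCl (fun z hz ↦ ?_) ?_
  · rw [frontier_ball 0 hR0, mem_sphere_zero_iff_norm] at hz
    rw [hg_eq z (norm_ne_zero_iff.1 (hz ▸ hR0))]
    exact hC z hz
  · rw [closure_ball 0 hR0]
    simpa using hR

theorem norm_remakProduct_le_of_monotone (T : Finset ℝ) (hT : ∀ t ∈ T, 0 < t) (ε : Fin n → ℂ)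
    (hε : ∀ i, ‖ε i‖ ∈ T) (hmono : Monotone (‖ε ·‖)) : ‖remakProduct ε‖ ≤ √(n ^ n) := by
  induction T using Finset.induction_on_min generalizing ε with
  | empty => exact norm_remakProduct_le_of_norm_eq one_pos fun i ↦ by simpa using hε i
  | insert a S haS ih =>
    have ha : 0 < a := hT a (mem_insert_self a S)
    rcases S.eq_empty_or_nonempty with rfl | hS
    · exact norm_remakProduct_le_of_norm_eq ha fun i ↦ by simpa using hε i
    classical
    set b := S.min' hS
    set s := univ.filter fun i ↦ ‖ε i‖ = a
    have hab : a < b := haS b (S.min'_mem hS)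
    have hmem : ∀ i, ‖ε i‖ ≠ a → ‖ε i‖ ∈ S := fun i ↦ (mem_insert.1 (hε i)).resolve_left
    have hb_le : ∀ i, ‖ε i‖ ≠ a → b ≤ ‖ε i‖ := fun i hi ↦ S.min'_le _ (hmem i hi)
    have hs : IsLowerSet (s : Set (Fin n)) := fun i j hji hi ↦ by
      simp only [coe_filter, mem_univ, true_and, s] at hi ⊢
      by_contra hj
      exact (haS _ (hmem j hj)).not_ge (hi ▸ hmono hji)
    refine norm_remakProduct_le_of_norm_piecewise_smul_le hs (R := b / a)
      ((one_le_div ha).2 hab.le) fun z hz ↦ ?_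
    have hnorm : ∀ i, ‖s.piecewise (z • ε) ε i‖ = max ‖ε i‖ b := fun i ↦ by
      by_cases hi : ‖ε i‖ = a
      · rw [piecewise_eq_of_mem _ _ _ (by simpa [s] using hi), Pi.smul_apply, smul_eq_mul,
          norm_mul, hz, hi, div_mul_cancel₀ _ ha.ne', max_eq_right hab.le]
      · rw [piecewise_eq_of_notMem _ _ _ (by simpa [s] using hi), max_eq_left (hb_le i hi)]
    refine ih (fun t ht ↦ hT t (mem_insert_of_mem ht)) _ (fun i ↦ ?_) fun i j hij ↦ ?_
    · rw [hnorm]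
      by_cases hi : ‖ε i‖ = a
      · rw [hi, max_eq_right hab.le]
        exact S.min'_mem hS
      · rw [max_eq_left (hb_le i hi)]
        exact hmem i hi
    · simp only [hnorm]
      exact max_le_max_right b (hmono hij)

end RemakProduct

theorem stmt_5 (n : ℕ) (ε : Fin n → ℂ) (h0 : ∀ i, ε i ≠ 0)
    (hmono : ∀ i j : Fin n, i ≤ j → ‖ε i‖ ≤ ‖ε j‖) :
    ∏ j : Fin n, ∏ i ∈ Finset.Iio j,
      ‖1 - ε i / ε j‖ ^ 2 ≤ (n : ℝ) ^ n := by
  have hpos : ∀ t ∈ univ.image (‖ε ·‖), 0 < t := by simpa using h0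
  have h := norm_remakProduct_le_of_monotone _ hpos ε (fun i ↦ mem_image_of_mem _ (mem_univ i))
    fun i j ↦ hmono i j
  rwa [Real.le_sqrt (norm_nonneg _) (by positivity), norm_remakProduct_sq] at h
end

section
/- For all (x,g) ∈ [-1,1]², one has (1 - 2xg + x²)·2√(1-g²) ≤ 3^{3/2}, with equality at (x,g) = (1,-1/2). -/
/-!
Since `x ↦ 1 - 2xg + x²` is convex, on `[-1, 1]` it is at most its larger endpoint value
`2(1 + |g|)`. With `t = |g|` the claim reduces to `4(1 + t)√(1 - t²) ≤ 3√3`, whose square is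
`16(1 + t)³(1 - t) ≤ 27`; this holds because
`27 - 16(1 + t)³(1 - t) = (2t - 1)²(4t² + 12t + 11)`, with equality at `t = 1/2`.
-/

open Real

lemma rpow_three_halves {x : ℝ} (hx : 0 ≤ x) : x ^ ((3 : ℝ) / 2) = x * √x := by
  rw [rpow_div_two_eq_sqrt _ hx, show (3 : ℝ) = (3 : ℕ) by norm_num, rpow_natCast, pow_succ,
    sq_sqrt hx]

lemma one_sub_two_mul_mul_add_sq_le {x : ℝ} (g : ℝ) (hx : |x| ≤ 1) :
    1 - 2 * x * g + x ^ 2 ≤ 2 * (1 + |g|) := by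
  have hxg : -(x * g) ≤ |g| := by
    calc -(x * g) ≤ |x * g| := neg_le_abs _
      _ = |x| * |g| := abs_mul x g
      _ ≤ 1 * |g| := by gcongr
      _ = |g| := one_mul _
  have hx2 : x ^ 2 ≤ 1 := by nlinarith [sq_abs x, abs_nonneg x]
  linarith

lemma one_add_pow_three_mul_one_sub_le (t : ℝ) : 16 * ((1 + t) ^ 3 * (1 - t)) ≤ 27 := by
  have h : 27 - 16 * ((1 + t) ^ 3 * (1 - t)) = (2 * t - 1) ^ 2 * ((2 * t + 3) ^ 2 + 2) := by ring
  linarith [mul_nonneg (sq_nonneg (2 * t - 1)) (add_nonneg (sq_nonneg (2 * t + 3)) zero_le_two)]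

lemma four_mul_one_add_mul_sqrt_one_sub_sq_le {t : ℝ} (ht : |t| ≤ 1) :
    4 * (1 + t) * √(1 - t ^ 2) ≤ 3 * √3 := by
  have h1t : 0 ≤ 1 + t := by linarith [neg_abs_le t]
  have h1t2 : 0 ≤ 1 - t ^ 2 := by nlinarith [sq_abs t, abs_nonneg t]
  have hsq : (4 * (1 + t) * √(1 - t ^ 2)) ^ 2 = 16 * ((1 + t) ^ 3 * (1 - t)) := by
    rw [mul_pow, sq_sqrt h1t2]; ring
  have hsq' : (3 * √3) ^ 2 = 27 := by rw [mul_pow, sq_sqrt zero_le_three]; norm_num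
  refine (pow_le_pow_iff_left₀ (by positivity) (by positivity) two_ne_zero).1 ?_
  rw [hsq, hsq']
  exact one_add_pow_three_mul_one_sub_le t

theorem stmt_6 :
    (∀ x g : ℝ, x ∈ Set.Icc (-1 : ℝ) 1 → g ∈ Set.Icc (-1 : ℝ) 1 →
      (1 - 2 * x * g + x ^ 2) * (2 * Real.sqrt (1 - g ^ 2)) ≤ (3 : ℝ) ^ ((3 : ℝ) / 2)) ∧
    (1 - 2 * 1 * (-1 / 2) + (1 : ℝ) ^ 2) * (2 * Real.sqrt (1 - (-1 / 2 : ℝ) ^ 2))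
      = (3 : ℝ) ^ ((3 : ℝ) / 2) := by
  rw [rpow_three_halves zero_le_three]
  constructor
  · rintro x g hx hg
    have hg' : |(|g|)| ≤ 1 := by rw [abs_abs]; exact abs_le.2 hg
    calc (1 - 2 * x * g + x ^ 2) * (2 * √(1 - g ^ 2))
        ≤ 2 * (1 + |g|) * (2 * √(1 - g ^ 2)) := by
          gcongr
          exact one_sub_two_mul_mul_add_sq_le g (abs_le.2 hx)
      _ = 4 * (1 + |g|) * √(1 - |g| ^ 2) := by rw [sq_abs]; ring
      _ ≤ 3 * √3 := four_mul_one_add_mul_sqrt_one_sub_sq_le hg'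
  · have h : √(1 - (-1 / 2 : ℝ) ^ 2) = √3 / 2 := by
      rw [show (1 - (-1 / 2 : ℝ) ^ 2) = 3 / 2 ^ 2 by norm_num, sqrt_div' _ (sq_nonneg 2),
        sqrt_sq zero_le_two]
    rw [h]; ring
end

section
/- For all (x,y,g) ∈ [-1,1]³, one has (1-x)(1 - 2xyg + (xy)²)(1 - 2yg + y²)·2√(1-g²) ≤ 16, with equality at (x,y,g) = (-1,1,0). -/
/-!
Write `A = 1 - 2xyg + (xy)²` and `B = 1 - 2yg + y²`. Since `√(1 - g²) ≤ 1`, it suffices to show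
`(1 - x) A B ≤ 8`. For `x ≥ 0` this follows from `A ≤ (1 + x)²`, `B ≤ 4` and
`(1 - x)(1 + x)² ≤ 32/27`. For `x < 0`, the point `xy` lies between `0` and `-y`, so by convexity
`A ≤ max 1 (1 + 2yg + y²)`; together with `(1 + 2yg + y²) B = (1 + y²)² - 4y²g² ≤ 4` this gives
`A B ≤ 4`, while `1 - x ≤ 2`.
-/

/-- `sqDist g t = |t - e^{iθ}|²` when `g = cos θ`. -/
def sqDist (g t : ℝ) : ℝ := 1 - 2 * t * g + t ^ 2

namespace sqDist

variable {g : ℝ}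

lemma nonneg (hg : |g| ≤ 1) (t : ℝ) : 0 ≤ sqDist g t := by
  have : g ^ 2 ≤ 1 := by nlinarith [abs_le.mp hg]
  unfold sqDist
  nlinarith [sq_nonneg (t - g)]

lemma le_one_add_abs_sq (hg : |g| ≤ 1) (t : ℝ) : sqDist g t ≤ (1 + |t|) ^ 2 := by
  have : -(t * g) ≤ |t| := by
    calc -(t * g) ≤ |t * g| := neg_le_abs _
      _ = |t| * |g| := abs_mul t g
      _ ≤ |t| := mul_le_of_le_one_right (abs_nonneg t) hg
  unfold sqDist
  nlinarith [sq_abs t]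

lemma mul_le_max {l : ℝ} (hl₀ : 0 ≤ l) (hl₁ : l ≤ 1) (c : ℝ) :
    sqDist g (l * c) ≤ max 1 (sqDist g c) := by
  have convex : sqDist g (l * c) ≤ (1 - l) * 1 + l * sqDist g c := by
    unfold sqDist
    nlinarith [mul_nonneg (mul_nonneg hl₀ (sub_nonneg.mpr hl₁)) (sq_nonneg c)]
  calc sqDist g (l * c) ≤ (1 - l) * 1 + l * sqDist g c := convex
    _ ≤ (1 - l) * max 1 (sqDist g c) + l * max 1 (sqDist g c) :=
      add_le_add (mul_le_mul_of_nonneg_left (le_max_left _ _) (by linarith))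
        (mul_le_mul_of_nonneg_left (le_max_right _ _) hl₀)
    _ = max 1 (sqDist g c) := by ring

lemma neg_mul_self_le_four {y : ℝ} (hy : |y| ≤ 1) : sqDist g (-y) * sqDist g y ≤ 4 := by
  have hy2 : y ^ 2 ≤ 1 := by nlinarith [abs_le.mp hy]
  have : sqDist g (-y) * sqDist g y = (1 + y ^ 2) ^ 2 - 4 * y ^ 2 * g ^ 2 := by
    unfold sqDist; ring
  rw [this]
  nlinarith [mul_nonneg (sq_nonneg y) (sq_nonneg g)]

end sqDist

lemma one_sub_mul_one_add_sq_le {x : ℝ} (hx : -1 ≤ x) : (1 - x) * (1 + x) ^ 2 ≤ 32 / 27 := by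
  nlinarith [mul_nonneg (sq_nonneg (x - 1 / 3)) (by linarith : (0 : ℝ) ≤ x + 5 / 3)]

lemma one_sub_mul_sqDist_mul_sqDist_le_eight {x y g : ℝ} (hx : |x| ≤ 1) (hy : |y| ≤ 1)
    (hg : |g| ≤ 1) : (1 - x) * sqDist g (x * y) * sqDist g y ≤ 8 := by
  obtain ⟨hx₁, hx₂⟩ := abs_le.mp hx
  have hA := sqDist.nonneg hg (x * y)
  have hB := sqDist.nonneg hg y
  have hB₄ : sqDist g y ≤ 4 := by
    have := sqDist.le_one_add_abs_sq hg y
    nlinarith [abs_nonneg y]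
  rcases le_or_gt 0 x with hx₀ | hx₀
  · have hA_le : sqDist g (x * y) ≤ (1 + x) ^ 2 := by
      have hxy : |x * y| ≤ x := by
        rw [abs_mul, abs_of_nonneg hx₀]
        exact mul_le_of_le_one_right hx₀ hy
      calc sqDist g (x * y) ≤ (1 + |x * y|) ^ 2 := sqDist.le_one_add_abs_sq hg _
        _ ≤ (1 + x) ^ 2 := by gcongr
    calc (1 - x) * sqDist g (x * y) * sqDist g y ≤ (1 - x) * (1 + x) ^ 2 * 4 := by
          gcongr
      _ ≤ 32 / 27 * 4 := by gcongr; exact one_sub_mul_one_add_sq_le hx₁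
      _ ≤ 8 := by norm_num
  · have hAB : sqDist g (x * y) * sqDist g y ≤ 4 := by
      have hA_le : sqDist g (x * y) ≤ max 1 (sqDist g (-y)) := by
        simpa only [neg_mul_neg] using
          sqDist.mul_le_max (g := g) (l := -x) (by linarith) (by linarith) (-y)
      rcases le_max_iff.mp hA_le with h | h
      · exact (mul_le_of_le_one_left hB h).trans hB₄
      · exact (mul_le_mul_of_nonneg_right h hB).trans (sqDist.neg_mul_self_le_four hy)
    calc (1 - x) * sqDist g (x * y) * sqDist g y
        = (1 - x) * (sqDist g (x * y) * sqDist g y) := mul_assoc _ _ _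
      _ ≤ 2 * 4 := mul_le_mul (by linarith) hAB (mul_nonneg hA hB) zero_le_two
      _ = 8 := by norm_num

theorem stmt_8 :
    (∀ x y g : ℝ, x ∈ Set.Icc (-1 : ℝ) 1 → y ∈ Set.Icc (-1 : ℝ) 1 → g ∈ Set.Icc (-1 : ℝ) 1 →
      (1 - x) * (1 - 2 * (x * y) * g + (x * y) ^ 2) * (1 - 2 * y * g + y ^ 2) *
        (2 * Real.sqrt (1 - g ^ 2)) ≤ 16) ∧
    (1 - (-1 : ℝ)) * (1 - 2 * ((-1) * 1) * 0 + ((-1 : ℝ) * 1) ^ 2) * (1 - 2 * 1 * 0 + (1 : ℝ) ^ 2) *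
      (2 * Real.sqrt (1 - (0 : ℝ) ^ 2)) = 16 := by
  refine ⟨fun x y g hx hy hg => ?_, by norm_num⟩
  have hsqrt : Real.sqrt (1 - g ^ 2) ≤ 1 :=
    Real.sqrt_le_one.mpr (by nlinarith [sq_nonneg g])
  calc (1 - x) * sqDist g (x * y) * sqDist g y * (2 * Real.sqrt (1 - g ^ 2)) ≤ 8 * (2 * 1) := by
        gcongr
        exact one_sub_mul_sqDist_mul_sqDist_le_eight (abs_le.mpr hx) (abs_le.mpr hy) (abs_le.mpr hg)
    _ = 16 := by norm_num
end

section
/- For all (x,g,h) ∈ [-1,1]³, one has 4√(1-g²)√(1-h²)·((1+x²)² - 4x(1+x²)gh + 4x²(-1+g²+h²)) ≤ 16, with equality at (x,g,h) = (1, 1/√2, -1/√2). -/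
/-!
Write `a = √(1 - g²)`, `b = √(1 - h²)` and `s = g² + h²`. When `Q(x, g, h)` is nonnegative,
AM-GM gives `4ab ≤ 2(a² + b²) = 2(2 - s)` and `-2gh ≤ s`, which bounds the left-hand side by
`2(2 - s)((1 + u²)² + 2u(1 + u²)s + 4u²(s - 1))` with `u = |x|`. This two-variable polynomial is
at most `16` on `[0, 1] × [0, 2]`, with equality at `u = s = 1`.
-/

open Real

/-- The polynomial `Q(4, 2, {1, 3}, (x, g, h))` of the signature `(0, 2)`. -/
noncomputable def Q (x g h : ℝ) : ℝ :=
  (1 + x ^ 2) ^ 2 - 4 * x * (1 + x ^ 2) * g * h + 4 * x ^ 2 * (-1 + g ^ 2 + h ^ 2)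

lemma two_sub_mul_le_eight {u s : ℝ} (hu₀ : 0 ≤ u) (hu₁ : u ≤ 1) (hs₀ : 0 ≤ s) (hs₂ : s ≤ 2) :
    (2 - s) * ((1 + u ^ 2) ^ 2 + 2 * u * (1 + u ^ 2) * s + 4 * u ^ 2 * (s - 1)) ≤ 8 := by
  nlinarith [sq_nonneg (s - 1), sq_nonneg (u - 1), mul_nonneg hs₀ (sub_nonneg.2 hs₂),
    mul_nonneg hu₀ (sub_nonneg.2 hu₁), sq_nonneg (u * s - 1), sq_nonneg (u + s - 2),
    mul_nonneg (mul_nonneg hu₀ hu₀) (sub_nonneg.2 hu₁), sq_nonneg (s * (1 - u)),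
    mul_nonneg (mul_nonneg hu₀ hs₀) (sub_nonneg.2 hs₂),
    mul_nonneg (mul_nonneg hu₀ hu₀) (mul_nonneg hs₀ (sub_nonneg.2 hs₂))]

lemma Q_le_abs (x g h : ℝ) :
    Q x g h ≤ (1 + |x| ^ 2) ^ 2 + 2 * |x| * (1 + |x| ^ 2) * (g ^ 2 + h ^ 2)
      + 4 * |x| ^ 2 * (g ^ 2 + h ^ 2 - 1) := by
  have hgh : -(x * (g * h)) ≤ |x| * ((g ^ 2 + h ^ 2) / 2) :=
    calc -(x * (g * h)) ≤ |x * (g * h)| := neg_le_abs _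
      _ = |x| * |g * h| := abs_mul _ _
      _ ≤ |x| * ((g ^ 2 + h ^ 2) / 2) := by
        gcongr
        rw [abs_mul]
        nlinarith [two_mul_le_add_sq |g| |h|, sq_abs g, sq_abs h]
  have hx : 0 ≤ 4 * (1 + x ^ 2) := by positivity
  rw [sq_abs, Q]
  nlinarith [mul_le_mul_of_nonneg_left hgh hx]

lemma four_mul_sqrt_mul_sqrt_le {g h : ℝ} (hg : g ^ 2 ≤ 1) (hh : h ^ 2 ≤ 1) :
    4 * √(1 - g ^ 2) * √(1 - h ^ 2) ≤ 2 * (2 - (g ^ 2 + h ^ 2)) := by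
  have := two_mul_le_add_sq √(1 - g ^ 2) √(1 - h ^ 2)
  rw [sq_sqrt (by linarith), sq_sqrt (by linarith)] at this
  linarith

lemma sqrt_mul_sqrt_mul_Q_le {x g h : ℝ} (hx : x ∈ Set.Icc (-1 : ℝ) 1)
    (hg : g ∈ Set.Icc (-1 : ℝ) 1) (hh : h ∈ Set.Icc (-1 : ℝ) 1) :
    4 * √(1 - g ^ 2) * √(1 - h ^ 2) * Q x g h ≤ 16 := by
  have hg₁ : g ^ 2 ≤ 1 := sq_le_one_iff_abs_le_one g |>.2 (abs_le.2 hg)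
  have hh₁ : h ^ 2 ≤ 1 := sq_le_one_iff_abs_le_one h |>.2 (abs_le.2 hh)
  rcases le_total (Q x g h) 0 with hQ | hQ
  · exact (mul_nonpos_of_nonneg_of_nonpos (by positivity) hQ).trans (by norm_num)
  have hs₂ : 0 ≤ 2 - (g ^ 2 + h ^ 2) := by linarith
  calc 4 * √(1 - g ^ 2) * √(1 - h ^ 2) * Q x g h
      ≤ 2 * (2 - (g ^ 2 + h ^ 2)) * Q x g h :=
        mul_le_mul_of_nonneg_right (four_mul_sqrt_mul_sqrt_le hg₁ hh₁) hQ
    _ ≤ 2 * (2 - (g ^ 2 + h ^ 2)) * ((1 + |x| ^ 2) ^ 2 + 2 * |x| * (1 + |x| ^ 2) * (g ^ 2 + h ^ 2)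
          + 4 * |x| ^ 2 * (g ^ 2 + h ^ 2 - 1)) := by
        gcongr; exact Q_le_abs x g h
    _ ≤ 16 := by
        have := two_sub_mul_le_eight (s := g ^ 2 + h ^ 2) (abs_nonneg x) (abs_le.2 hx)
          (by positivity) (by linarith)
        linarith

lemma Q_one_inv_sqrt_two : Q 1 (1 / √2) (-(1 / √2)) = 8 := by
  have hsq : (1 / √2) ^ 2 = 1 / 2 := by rw [div_pow, sq_sqrt zero_le_two]; norm_num
  rw [Q]
  nlinarith [hsq]

theorem stmt_9 :
    (∀ x g h : ℝ, x ∈ Set.Icc (-1 : ℝ) 1 → g ∈ Set.Icc (-1 : ℝ) 1 → h ∈ Set.Icc (-1 : ℝ) 1 →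
      4 * Real.sqrt (1 - g ^ 2) * Real.sqrt (1 - h ^ 2) *
        ((1 + x ^ 2) ^ 2 - 4 * x * (1 + x ^ 2) * g * h + 4 * x ^ 2 * (-1 + g ^ 2 + h ^ 2)) ≤ 16) ∧
    4 * Real.sqrt (1 - (1 / Real.sqrt 2) ^ 2) * Real.sqrt (1 - (-(1 / Real.sqrt 2)) ^ 2) *
      ((1 + (1 : ℝ) ^ 2) ^ 2 - 4 * 1 * (1 + (1 : ℝ) ^ 2) * (1 / Real.sqrt 2) * (-(1 / Real.sqrt 2))
        + 4 * (1 : ℝ) ^ 2 * (-1 + (1 / Real.sqrt 2) ^ 2 + (-(1 / Real.sqrt 2)) ^ 2)) = 16 := by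
  refine ⟨fun x g h hx hg hh => sqrt_mul_sqrt_mul_Q_le hx hg hh, ?_⟩
  change 4 * √(1 - (1 / √2) ^ 2) * √(1 - (-(1 / √2)) ^ 2) * Q 1 (1 / √2) (-(1 / √2)) = 16
  have hsq : (1 / √2) ^ 2 = 1 / 2 := by rw [div_pow, sq_sqrt zero_le_two]; norm_num
  rw [Q_one_inv_sqrt_two, neg_sq, hsq, mul_assoc 4, mul_self_sqrt (by norm_num)]
  norm_num
end

section
/- Let α₁, α₂, α₃ be real numbers with α₃ = 1 and let (z,g) ∈ (-1,1)² be such that each 1 - 2αⱼzg + αⱼ²z² > 0 and both ∑_{j=1}^{3} (-2αⱼg + 2αⱼ²z)/(1 - 2αⱼzg + αⱼ²z²) = 0 and -g/(1-g²) + ∑_{j=1}^{3} (-2αⱼz)/(1 - 2αⱼzg + αⱼ²z²) = 0 hold. Then g = 0 and z = 0. -/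
/-!
Multiplying the first condition by `z`, the second by `g`, and subtracting cancels every mixed
term `2 αⱼ z g / Dⱼ` (where `Dⱼ = 1 - 2αⱼzg + αⱼ²z²`) and leaves
`g² / (1 - g²) + ∑ⱼ 2 αⱼ² z² / Dⱼ = 0`, a sum of nonnegative terms. Hence `g = 0` and every
`αⱼ z` vanishes; `α₃ = 1` then forces `z = 0`.
-/

open Finset

section StationaryPoint

variable {ι : Type*} [Fintype ι] (α : ι → ℝ) (z g : ℝ)

theorem stationary_combination :
    z * ∑ j, (-2 * α j * g + 2 * α j ^ 2 * z) / (1 - 2 * α j * z * g + α j ^ 2 * z ^ 2)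
      - g * (-g / (1 - g ^ 2) + ∑ j, (-2 * α j * z) / (1 - 2 * α j * z * g + α j ^ 2 * z ^ 2))
      = g ^ 2 / (1 - g ^ 2) + ∑ j, 2 * α j ^ 2 * z ^ 2 / (1 - 2 * α j * z * g + α j ^ 2 * z ^ 2) := by
  have hterm : ∀ j, z * ((-2 * α j * g + 2 * α j ^ 2 * z) / (1 - 2 * α j * z * g + α j ^ 2 * z ^ 2))
      - g * ((-2 * α j * z) / (1 - 2 * α j * z * g + α j ^ 2 * z ^ 2))
      = 2 * α j ^ 2 * z ^ 2 / (1 - 2 * α j * z * g + α j ^ 2 * z ^ 2) := fun j => by ring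
  simp only [← hterm, sum_sub_distrib, mul_add, mul_sum]
  ring

variable {α z g}

theorem eq_zero_of_stationary (hg : g ^ 2 < 1)
    (hpos : ∀ j, 0 < 1 - 2 * α j * z * g + α j ^ 2 * z ^ 2)
    (hI : ∑ j, (-2 * α j * g + 2 * α j ^ 2 * z) / (1 - 2 * α j * z * g + α j ^ 2 * z ^ 2) = 0)
    (hII : -g / (1 - g ^ 2) +
      ∑ j, (-2 * α j * z) / (1 - 2 * α j * z * g + α j ^ 2 * z ^ 2) = 0) :
    g = 0 ∧ ∀ j, α j * z = 0 := by
  have hsum := stationary_combination α z g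
  rw [hI, hII, mul_zero, mul_zero, sub_zero] at hsum
  have hg_nonneg : 0 ≤ g ^ 2 / (1 - g ^ 2) := div_nonneg (sq_nonneg g) (by linarith)
  have hterms_nonneg : ∀ j ∈ univ,
      0 ≤ 2 * α j ^ 2 * z ^ 2 / (1 - 2 * α j * z * g + α j ^ 2 * z ^ 2) :=
    fun j _ => div_nonneg (by positivity) (hpos j).le
  obtain ⟨hg_zero, hterms_zero⟩ :=
    (add_eq_zero_iff_of_nonneg hg_nonneg (sum_nonneg hterms_nonneg)).mp hsum.symm
  rw [sum_eq_zero_iff_of_nonneg hterms_nonneg] at hterms_zero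
  refine ⟨by simpa [(by linarith : (1 - g ^ 2) ≠ 0)] using hg_zero, fun j => ?_⟩
  have := hterms_zero j (mem_univ j)
  rw [div_eq_zero_iff, or_iff_left (hpos j).ne'] at this
  have : (α j * z) ^ 2 = 0 := by linarith
  exact pow_eq_zero_iff two_ne_zero |>.mp this

end StationaryPoint

theorem stmt_10_general (α : Fin 3 → ℝ) (hα3 : α 2 = 1) (z g : ℝ)
    (hg : g ∈ Set.Ioo (-1 : ℝ) 1)
    (hpos : ∀ j, 0 < 1 - 2 * α j * z * g + (α j) ^ 2 * z ^ 2)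
    (hI : ∑ j, (-2 * α j * g + 2 * (α j) ^ 2 * z) / (1 - 2 * α j * z * g + (α j) ^ 2 * z ^ 2) = 0)
    (hII : -g / (1 - g ^ 2) +
      ∑ j, (-2 * α j * z) / (1 - 2 * α j * z * g + (α j) ^ 2 * z ^ 2) = 0) :
    g = 0 ∧ z = 0 := by
  have hg2 : g ^ 2 < 1 := by nlinarith [hg.1, hg.2]
  obtain ⟨hg0, hαz⟩ := eq_zero_of_stationary hg2 hpos hI hII
  simpa [hα3] using And.intro hg0 (hαz 2)

theorem stmt_10 (α : Fin 3 → ℝ) (hα3 : α 2 = 1) (z g : ℝ)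
    (hz : z ∈ Set.Ioo (-1 : ℝ) 1) (hg : g ∈ Set.Ioo (-1 : ℝ) 1)
    (hpos : ∀ j, 0 < 1 - 2 * α j * z * g + (α j) ^ 2 * z ^ 2)
    (hI : ∑ j, (-2 * α j * g + 2 * (α j) ^ 2 * z) / (1 - 2 * α j * z * g + (α j) ^ 2 * z ^ 2) = 0)
    (hII : -g / (1 - g ^ 2) +
      ∑ j, (-2 * α j * z) / (1 - 2 * α j * z * g + (α j) ^ 2 * z ^ 2) = 0) :
    g = 0 ∧ z = 0 :=
  stmt_10_general α hα3 z g hg hpos hI hII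
end

section
/- For every g ∈ (-1,1) there exists a unique x ∈ (-1,1) with g = 2x³/(1-3x²) and -4x³ - 6gx² + 2g = 0; i.e., the map x ↦ 2x³/(1-3x²) restricted suitably is a bijection from (-1,1) onto (-1,1) when interpreted through the critical-point equation ∂S/∂x(x,g) = 0 with S(x,g) = (1-x²)(1+2xg+x²). -/
/-!
Write `f g x = -4x³ - 6gx² + 2g`. Since `f g (-1) = 4 - 4g > 0 > -4 - 4g = f g 1`, a root exists
by the intermediate value theorem. As `f (-g) (-x) = -f g x`, uniqueness reduces to `g ≥ 0`.
Then `f g` is strictly decreasing on `[0, ∞)` and positive on `(-1, 0)`, so the root is unique.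
-/

open Set

/-- The partial derivative `∂S/∂x` of `S x g = (1 - x²)(1 + 2xg + x²)`. -/
def critCubic (g x : ℝ) : ℝ := -4 * x ^ 3 - 6 * g * x ^ 2 + 2 * g

lemma critCubic_neg_neg (g x : ℝ) : critCubic (-g) (-x) = -critCubic g x := by
  unfold critCubic; ring

lemma continuous_critCubic (g : ℝ) : Continuous (critCubic g) := by
  unfold critCubic; fun_prop

lemma strictAntiOn_critCubic {g : ℝ} (hg : 0 ≤ g) : StrictAntiOn (critCubic g) (Ici 0) := by
  intro x hx y hy hxy
  have hx : 0 ≤ x := hx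
  have hdiff : critCubic g x - critCubic g y
      = (y - x) * (4 * (x ^ 2 + x * y + y ^ 2) + 6 * g * (x + y)) := by
    unfold critCubic; ring
  have : 0 < (y - x) * (4 * (x ^ 2 + x * y + y ^ 2) + 6 * g * (x + y)) := by
    apply mul_pos (by linarith)
    nlinarith [mul_nonneg hg hx]
  linarith

/-- For `3x² > 1` this uses `g < 1` and `-4x³ - 6x² + 2 = -2(x + 1)²(2x - 1)`. -/
lemma critCubic_pos_of_neg {g x : ℝ} (hg₀ : 0 ≤ g) (hg₁ : g < 1) (hx₁ : -1 < x) (hx₀ : x < 0) :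
    0 < critCubic g x := by
  unfold critCubic
  rcases le_or_gt (3 * x ^ 2) 1 with hsmall | hlarge
  · nlinarith [pow_pos (neg_pos.mpr hx₀) 3, mul_nonneg hg₀ (sub_nonneg.mpr hsmall)]
  · nlinarith [mul_lt_mul_of_pos_right hg₁ (sub_pos.mpr hlarge),
      mul_pos (pow_pos (by linarith : (0 : ℝ) < x + 1) 2) (by linarith : (0 : ℝ) < 1 - 2 * x)]

lemma critCubic_eq_zero_unique_of_nonneg {g x y : ℝ} (hg₀ : 0 ≤ g) (hg₁ : g < 1)
    (hx : -1 < x) (hy : -1 < y) (hfx : critCubic g x = 0) (hfy : critCubic g y = 0) : x = y := by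
  have nonneg_of_root : ∀ z, -1 < z → critCubic g z = 0 → 0 ≤ z := fun z hz hfz ↦
    not_lt.mp fun hz₀ ↦ (critCubic_pos_of_neg hg₀ hg₁ hz hz₀).ne' hfz
  exact (strictAntiOn_critCubic hg₀).injOn (nonneg_of_root x hx hfx) (nonneg_of_root y hy hfy)
    (hfx.trans hfy.symm)

lemma exists_critCubic_eq_zero {g : ℝ} (hg : g ∈ Ioo (-1 : ℝ) 1) :
    ∃ x ∈ Ioo (-1 : ℝ) 1, critCubic g x = 0 := by
  obtain ⟨hg₁, hg₂⟩ := hg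
  have hsign : (0 : ℝ) ∈ Ioo (critCubic g 1) (critCubic g (-1)) := by
    constructor <;> · unfold critCubic; linarith
  exact intermediate_value_Ioo' (by norm_num) (continuous_critCubic g).continuousOn hsign

theorem stmt_18 (g : ℝ) (hg : g ∈ Set.Ioo (-1 : ℝ) 1) :
    ∃! x : ℝ, x ∈ Set.Ioo (-1 : ℝ) 1 ∧ -4 * x ^ 3 - 6 * g * x ^ 2 + 2 * g = 0 := by
  obtain ⟨x, hx, hfx⟩ := exists_critCubic_eq_zero hg
  refine ⟨x, ⟨hx, hfx⟩, fun y ⟨hy, hfy⟩ ↦ ?_⟩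
  change critCubic g y = 0 at hfy
  rcases le_total 0 g with hg₀ | hg₀
  · exact critCubic_eq_zero_unique_of_nonneg hg₀ hg.2 hy.1 hx.1 hfy hfx
  · have hneg : ∀ z, critCubic g z = 0 → critCubic (-g) (-z) = 0 := fun z hz ↦ by
      rw [critCubic_neg_neg, hz, neg_zero]
    have := critCubic_eq_zero_unique_of_nonneg (neg_nonneg.mpr hg₀) (by linarith [hg.1])
      (by linarith [hy.2]) (by linarith [hx.2]) (hneg y hfy) (hneg x hfx)
    exact neg_injective this
end

section
/- For all (r,g) ∈ [0,1] × [-1,1], one has (1 - 2rg + r²)·2√(1-g²) ≤ 3^{3/2}, with equality at (r,g) = (1,-1/2). -/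
/-!
Write `A = 1 - 2 r g + r²`. As a convex function of `r`, `A` lies below the chord between
its values `1` at `r = 0` and `2 - 2g` at `r = 1`. If `A ≤ 1` the bound is trivial; otherwise
`(2 A √(1 - g²))² ≤ 16 (1 - g)³ (1 + g)`, and `27` minus this quartic has the double root
`g = -1/2`, where the maximum is attained.
-/

lemma rpow_three_halves_three : (3 : ℝ) ^ ((3 : ℝ) / 2) = √27 := by
  rw [Real.sqrt_eq_rpow, show (27 : ℝ) = 3 ^ (3 : ℝ) by norm_num, ← Real.rpow_mul (by norm_num)]
  norm_num

lemma one_sub_two_mul_mul_add_sq_nonneg {g : ℝ} (r : ℝ) (hg : g ^ 2 ≤ 1) :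
    0 ≤ 1 - 2 * r * g + r ^ 2 := by
  nlinarith [sq_nonneg (r - g)]

lemma one_sub_two_mul_mul_add_sq_le_max {r : ℝ} (g : ℝ) (hr : r ∈ Set.Icc (0 : ℝ) 1) :
    1 - 2 * r * g + r ^ 2 ≤ max 1 (2 - 2 * g) := by
  have chord : 1 - 2 * r * g + r ^ 2 ≤ (1 - r) * 1 + r * (2 - 2 * g) := by
    nlinarith [mul_nonneg hr.1 (sub_nonneg.2 hr.2)]
  calc 1 - 2 * r * g + r ^ 2 ≤ (1 - r) * 1 + r * (2 - 2 * g) := chord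
    _ ≤ (1 - r) * max 1 (2 - 2 * g) + r * max 1 (2 - 2 * g) := by
        gcongr <;> linarith [hr.1, hr.2, le_max_left 1 (2 - 2 * g), le_max_right 1 (2 - 2 * g)]
    _ = max 1 (2 - 2 * g) := by ring

lemma sixteen_mul_one_sub_pow_three_mul_one_add_le (g : ℝ) :
    16 * (1 - g) ^ 3 * (1 + g) ≤ 27 := by
  have h : 27 - 16 * (1 - g) ^ 3 * (1 + g) = (2 * g + 1) ^ 2 * ((3 - 2 * g) ^ 2 + 2) := by ring
  have : 0 ≤ (2 * g + 1) ^ 2 * ((3 - 2 * g) ^ 2 + 2) := by positivity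
  linarith

lemma four_mul_sq_mul_one_sub_sq_le {A g : ℝ} (hA₀ : 0 ≤ A) (hA : A ≤ max 1 (2 - 2 * g))
    (hg : g ^ 2 ≤ 1) : 4 * A ^ 2 * (1 - g ^ 2) ≤ 27 := by
  have hg₀ : 0 ≤ 1 - g ^ 2 := sub_nonneg.2 hg
  rcases le_max_iff.1 hA with hA | hA
  · have : A ^ 2 ≤ 1 := pow_le_one₀ hA₀ hA
    nlinarith [mul_le_mul_of_nonneg_right this hg₀]
  · calc 4 * A ^ 2 * (1 - g ^ 2) ≤ 4 * (2 - 2 * g) ^ 2 * (1 - g ^ 2) := by gcongr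
      _ = 16 * (1 - g) ^ 3 * (1 + g) := by ring
      _ ≤ 27 := sixteen_mul_one_sub_pow_three_mul_one_add_le g

theorem stmt_19 :
    (∀ r g : ℝ, r ∈ Set.Icc (0 : ℝ) 1 → g ∈ Set.Icc (-1 : ℝ) 1 →
      (1 - 2 * r * g + r ^ 2) * (2 * Real.sqrt (1 - g ^ 2)) ≤ (3 : ℝ) ^ ((3 : ℝ) / 2)) ∧
    (1 - 2 * 1 * (-1 / 2) + (1 : ℝ) ^ 2) * (2 * Real.sqrt (1 - (-1 / 2 : ℝ) ^ 2))
      = (3 : ℝ) ^ ((3 : ℝ) / 2) := by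
  rw [rpow_three_halves_three]
  refine ⟨fun r g hr hg => ?_, ?_⟩
  · have hg₂ : g ^ 2 ≤ 1 := sq_le_one_iff_abs_le_one g |>.2 (abs_le.2 hg)
    refine le_trans (le_abs_self _) (Real.abs_le_sqrt ?_)
    rw [mul_pow, mul_pow, Real.sq_sqrt (sub_nonneg.2 hg₂)]
    linarith [four_mul_sq_mul_one_sub_sq_le (one_sub_two_mul_mul_add_sq_nonneg r hg₂)
      (one_sub_two_mul_mul_add_sq_le_max g hr) hg₂]
  · rw [show (27 : ℝ) = 6 ^ 2 * (3 / 4) by norm_num, Real.sqrt_mul (by positivity),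
      Real.sqrt_sq (by norm_num)]
    norm_num
    ring
end
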